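/- Let B be a C*-algebra and ∂ a closed, densely defined linear operator on B (viewed as a Banach space), with domain dom(∂) ⊆ B. Let E be a Hilbert C*-module over B, 𝔈 ⊆ E a dense subspace, and ∇ : 𝔈 → E a linear map which is Hermitian in the sense that for all ξ, η ∈ 𝔈 the inner product ⟪ξ, η⟫ lies in dom(∂) and ⟪ξ, ∇η⟫ + ⟪∇ξ, η⟫ = ∂(⟪ξ, η⟫). Suppose there is a sequence (ξ_j)_{j∈ℕ} of elements of 𝔈 which is a frame for E, i.e. for every x ∈ E the partial sums ∑_{j=0}^N ξ_j·⟪ξ_j, x⟫ converge in norm to x. Then ∇ is closable: whenever ζ_n ∈ 𝔈 with ζ_n → 0 in E and ∇(ζ_n) → η in E, one has η = 0. -/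

import Mathlib

open Filter Topology
open scoped RightActions

/-- The Hilbert C⋆-module class as it stood in the older Mathlib (`CStarModule`): `E` is a
right `A`-module (action of `Aᵐᵒᵖ`) with an `A`-valued inner product satisfying
`⟪x, y <• a⟫ = ⟪x, y⟫ * a`. -/
class RightCStarModule (A E : Type*) [NonUnitalSemiring A] [StarRing A] [Module ℂ A]
    [AddCommGroup E] [Module ℂ E] [PartialOrder A] [SMul Aᵐᵒᵖ E] [Norm A] [Norm E]
    extends Inner A E where
  inner_add_right {x} {y} {z} : inner x (y + z) = inner x y + inner x z
  inner_self_nonneg {x} : 0 ≤ inner x x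
  inner_self {x} : inner x x = 0 ↔ x = 0
  inner_op_smul_right {a : A} {x y : E} : inner x (y <• a) = inner x y * a
  inner_smul_right_complex {z : ℂ} {x} {y} : inner x (z • y) = z • inner x y
  star_inner x y : star (inner x y) = inner y x
  norm_eq_sqrt_norm_inner_self x : ‖x‖ = Real.sqrt ‖inner x x‖

/-! Pairing `∇ζₙ → η` with a frame vector `ξⱼ ∈ 𝔈` and using the Hermitian identity gives
`∂⟪ξⱼ, ζₙ⟫ = ⟪ξⱼ, ∇ζₙ⟫ + ⟪∇ξⱼ, ζₙ⟫ → ⟪ξⱼ, η⟫` while `⟪ξⱼ, ζₙ⟫ → 0`; closedness of `∂` forces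
`⟪ξⱼ, η⟫ = 0` for every `j`, and then the frame expansion of `η` vanishes term by term. -/

namespace RightCStarModule

section Algebraic

variable {A E : Type*} [NonUnitalRing A] [StarRing A] [Module ℂ A] [PartialOrder A] [Norm A]
  [AddCommGroup E] [Module ℂ E] [SMul Aᵐᵒᵖ E] [Norm E] [RightCStarModule A E]

theorem inner_sub_right {x y z : E} : (inner A x (y - z) : A) = inner A x y - inner A x z := by
  rw [eq_sub_iff_add_eq, ← inner_add_right, sub_add_cancel]

@[simp]
theorem inner_zero_right {x : E} : (inner A x (0 : E) : A) = 0 := by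
  simpa using inner_sub_right (A := A) (x := x) (y := (0 : E)) (z := (0 : E))

end Algebraic

variable {B E : Type*} [CStarAlgebra B] [PartialOrder B] [NormedAddCommGroup E] [Module ℂ E]
  [Module Bᵐᵒᵖ E] [RightCStarModule B E]

/-- A right Hilbert `B`-module is a Hilbert `Bᵐᵒᵖ`-module in the sense of Mathlib's
`CStarModule`, whose `Bᵐᵒᵖ`-action is on the left. -/
noncomputable abbrev toCStarModuleOp : CStarModule Bᵐᵒᵖ E where
  inner x y := MulOpposite.op (inner B x y)
  inner_add_right := by simp [inner_add_right]
  inner_self_nonneg := MulOpposite.op_nonneg.mpr inner_self_nonneg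
  inner_self := MulOpposite.op_eq_zero_iff _ |>.trans inner_self
  inner_op_smul_right {a x y} := by
    rw [← MulOpposite.op_unop a, ← MulOpposite.op_mul]
    exact congrArg MulOpposite.op inner_op_smul_right
  inner_smul_right_complex := by simp [inner_smul_right_complex]
  star_inner x y := by rw [← MulOpposite.op_star, star_inner]
  norm_eq_sqrt_norm_inner_self x := by
    rw [MulOpposite.norm_op, norm_eq_sqrt_norm_inner_self (A := B)]

theorem norm_inner_le [StarOrderedRing B] {x y : E} : ‖(inner B x y : B)‖ ≤ ‖x‖ * ‖y‖ :=
  letI := (toCStarModuleOp : CStarModule Bᵐᵒᵖ E)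
  CStarModule.norm_inner_le E (A := Bᵐᵒᵖ)

theorem tendsto_inner_right [StarOrderedRing B] {ι : Type*} {l : Filter ι} (x : E) {f : ι → E}
    {y : E} (hf : Tendsto f l (𝓝 y)) :
    Tendsto (fun i => (inner B x (f i) : B)) l (𝓝 (inner B x y)) := by
  rw [tendsto_iff_norm_sub_tendsto_zero] at hf ⊢
  refine squeeze_zero (fun _ => norm_nonneg _) (fun i => ?_) (by simpa using hf.const_mul ‖x‖)
  rw [← inner_sub_right]
  exact norm_inner_le

theorem eq_zero_of_frame_of_inner_eq_zero {ξ : ℕ → E} {x : E}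
    (hframe : Tendsto (fun N : ℕ => ∑ j ∈ Finset.range (N + 1), ξ j <• (inner B (ξ j) x : B))
      atTop (𝓝 x))
    (hx : ∀ j, (inner B (ξ j) x : B) = 0) : x = 0 := by
  simp only [hx, MulOpposite.op_zero, zero_smul, Finset.sum_const_zero] at hframe
  exact tendsto_nhds_unique hframe tendsto_const_nhds

end RightCStarModule

theorem LinearPMap.IsClosed.eq_zero_of_tendsto {R M N : Type*} [CommRing R] [AddCommGroup M]
    [Module R M] [TopologicalSpace M] [AddCommGroup N] [Module R N] [TopologicalSpace N]
    [T2Space N] {f : M →ₗ.[R] N} (hf : f.IsClosed) {ι : Type*} {l : Filter ι} [l.NeBot]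
    {x : ι → f.domain} {y : N} (hx : Tendsto (fun i => (x i : M)) l (𝓝 0))
    (hfx : Tendsto (fun i => f (x i)) l (𝓝 y)) : y = 0 := by
  have hgraph : ((0 : M), y) ∈ f.graph :=
    hf.mem_of_tendsto (hx.prodMk_nhds hfx) (Eventually.of_forall fun i => f.mem_graph (x i))
  simpa [eq_comm] using f.mem_graph_iff.mp hgraph

theorem inner_eq_zero_of_tendsto_of_hermitian
    {B E : Type*} [CStarAlgebra B] [PartialOrder B] [StarOrderedRing B]
    [NormedAddCommGroup E] [Module ℂ E] [Module Bᵐᵒᵖ E] [RightCStarModule B E]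
    {dd : B →ₗ.[ℂ] B} (hdd_closed : dd.IsClosed) {𝔈 : Submodule ℂ E} {Nab : 𝔈 →ₗ[ℂ] E}
    (hmem : ∀ ξ η : 𝔈, (inner B (ξ : E) (η : E) : B) ∈ dd.domain)
    (hHerm : ∀ ξ η : 𝔈,
      (inner B (ξ : E) (Nab η) : B) + (inner B (Nab ξ) (η : E) : B)
        = dd ⟨(inner B (ξ : E) (η : E) : B), hmem ξ η⟩)
    (ξ : 𝔈) {ζ : ℕ → 𝔈} {η : E} (hζ : Tendsto (fun n => (ζ n : E)) atTop (𝓝 0))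
    (hη : Tendsto (fun n => Nab (ζ n)) atTop (𝓝 η)) :
    (inner B (ξ : E) η : B) = 0 := by
  have h_inner : Tendsto (fun n => (inner B (ξ : E) (ζ n : E) : B)) atTop (𝓝 0) := by
    simpa using RightCStarModule.tendsto_inner_right (B := B) (ξ : E) hζ
  have h_dd : Tendsto (fun n => dd ⟨_, hmem ξ (ζ n)⟩) atTop (𝓝 (inner B (ξ : E) η : B)) := by
    have hsum := (RightCStarModule.tendsto_inner_right (B := B) (ξ : E) hη).add
      (RightCStarModule.tendsto_inner_right (B := B) (Nab ξ) hζ)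
    rw [RightCStarModule.inner_zero_right, add_zero] at hsum
    exact hsum.congr fun n => hHerm ξ (ζ n)
  exact hdd_closed.eq_zero_of_tendsto (x := fun n => ⟨_, hmem ξ (ζ n)⟩) h_inner h_dd

theorem hermitian_connexion_closable_of_frame_general
    {B E : Type*} [CStarAlgebra B] [PartialOrder B] [StarOrderedRing B]
    [NormedAddCommGroup E] [Module ℂ E] [Module Bᵐᵒᵖ E] [RightCStarModule B E]
    (dd : B →ₗ.[ℂ] B) (hdd_closed : dd.IsClosed)
    (𝔈 : Submodule ℂ E)
    (Nab : 𝔈 →ₗ[ℂ] E)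
    (hmem : ∀ ξ η : 𝔈, (inner B (ξ : E) (η : E) : B) ∈ dd.domain)
    (hHerm : ∀ ξ η : 𝔈,
      (inner B (ξ : E) (Nab η) : B) + (inner B (Nab ξ) (η : E) : B)
        = dd ⟨(inner B (ξ : E) (η : E) : B), hmem ξ η⟩)
    (ξseq : ℕ → E) (hξmem : ∀ j, ξseq j ∈ 𝔈)
    (hframe : ∀ x : E,
      Tendsto (fun N : ℕ => ∑ j ∈ Finset.range (N + 1),
        ξseq j <• (inner B (ξseq j) x : B)) atTop (𝓝 x)) :
    ∀ (ζ : ℕ → 𝔈) (η : E),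
      Tendsto (fun n => (ζ n : E)) atTop (𝓝 (0 : E)) →
      Tendsto (fun n => Nab (ζ n)) atTop (𝓝 η) → η = 0 := by
  intro ζ η hζ hη
  refine RightCStarModule.eq_zero_of_frame_of_inner_eq_zero (hframe η) fun j => ?_
  exact inner_eq_zero_of_tendsto_of_hermitian hdd_closed hmem hHerm ⟨ξseq j, hξmem j⟩ hζ hη

/-- Let `B` be a C⋆-algebra, `∂` a closed densely defined operator on
`B`, `E` a Hilbert C⋆-module over `B`, `𝔈 ⊆ E` a dense subspace and `∇ : 𝔈 → E` a
Hermitian linear map, i.e. `⟪ξ, η⟫ ∈ dom ∂` and `⟪ξ, ∇η⟫ + ⟪∇ξ, η⟫ = ∂⟪ξ, η⟫` for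
`ξ, η ∈ 𝔈`.  If `𝔈` contains a (countable) frame `(ξⱼ)` for `E`, then `∇` is closable:
`ζₙ ∈ 𝔈`, `ζₙ → 0` and `∇ζₙ → η` imply `η = 0`. -/
theorem hermitian_connexion_closable_of_frame
    {B E : Type*} [CStarAlgebra B] [PartialOrder B] [StarOrderedRing B]
    [NormedAddCommGroup E] [Module ℂ E] [Module Bᵐᵒᵖ E] [RightCStarModule B E] [CompleteSpace E]
    (dd : B →ₗ.[ℂ] B) (hdd_dense : Dense (dd.domain : Set B)) (hdd_closed : dd.IsClosed)
    (𝔈 : Submodule ℂ E) (h𝔈 : Dense (𝔈 : Set E))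
    (Nab : 𝔈 →ₗ[ℂ] E)
    (hmem : ∀ ξ η : 𝔈, (inner B (ξ : E) (η : E) : B) ∈ dd.domain)
    (hHerm : ∀ ξ η : 𝔈,
      (inner B (ξ : E) (Nab η) : B) + (inner B (Nab ξ) (η : E) : B)
        = dd ⟨(inner B (ξ : E) (η : E) : B), hmem ξ η⟩)
    (ξseq : ℕ → E) (hξmem : ∀ j, ξseq j ∈ 𝔈)
    (hframe : ∀ x : E,
      Tendsto (fun N : ℕ => ∑ j ∈ Finset.range (N + 1),
        ξseq j <• (inner B (ξseq j) x : B)) atTop (𝓝 x)) :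
    ∀ (ζ : ℕ → 𝔈) (η : E),
      Tendsto (fun n => (ζ n : E)) atTop (𝓝 (0 : E)) →
      Tendsto (fun n => Nab (ζ n)) atTop (𝓝 η) → η = 0 :=
  hermitian_connexion_closable_of_frame_general dd hdd_closed 𝔈 Nab hmem hHerm ξseq hξmem hframe
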